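/- arXiv:2408.12678 — 5 statements merged into one kernel-verified Lean document; each statement's English description precedes it below -/
import Mathlib

section
/- Let R be a commutative ring, k ≥ 1, and let e_1 ≤ … ≤ e_k and f_1 ≤ … ≤ f_k be nondecreasing integer tuples. Let A be a k×k matrix with entries in the polynomial ring R[t] satisfying deg A_{r,c} ≤ f_r − e_{k+1−c} for all r, c (with the convention deg 0 = −∞, so the entry A_{r,c} must be 0 whenever f_r − e_{k+1−c} < 0). If f_i < e_i for some 1 ≤ i ≤ k, then det A = 0. -/
/-!
Rows `r ≤ i` and columns `c` with `i ≤ c.rev` span a zero block of `A`: there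
`deg A r c ≤ f r - e c.rev ≤ f i - e i < 0`. The block has `i + 1` rows and `k - i` columns,
together more than `k`, so every permutation sends some column of the block to a row of the
block and every term of the Leibniz expansion of `det A` vanishes.
-/

open Finset

theorem Equiv.Perm.exists_mem_apply_mem_of_card_lt {n : Type*} [Fintype n] [DecidableEq n]
    (σ : Equiv.Perm n) (S T : Finset n) (hcard : Fintype.card n < #S + #T) :
    ∃ c ∈ T, σ c ∈ S := by
  obtain ⟨r, hr⟩ := inter_nonempty_of_card_lt_card_add_card (subset_univ S)
    (subset_univ (T.map σ.toEmbedding)) (by simpa using hcard)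
  obtain ⟨hrS, hrT⟩ := mem_inter.mp hr
  obtain ⟨c, hc, rfl⟩ := mem_map.mp hrT
  exact ⟨c, hc, hrS⟩

theorem Matrix.det_eq_zero_of_card_lt_of_block_eq_zero {n R : Type*} [Fintype n] [DecidableEq n]
    [CommRing R] (A : Matrix n n R) (S T : Finset n) (hcard : Fintype.card n < #S + #T)
    (hA : ∀ r ∈ S, ∀ c ∈ T, A r c = 0) : A.det = 0 := by
  rw [Matrix.det_apply]
  refine sum_eq_zero fun σ _ => ?_
  obtain ⟨c, hcT, hσc⟩ := σ.exists_mem_apply_mem_of_card_lt S T hcard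
  exact smul_eq_zero_of_right _ (prod_eq_zero (mem_univ c) (hA _ hσc c hcT))

theorem stmt_4_general {R : Type*} [CommRing R] (k : ℕ)
    (e f : Fin k → ℤ) (he : Monotone e) (hf : Monotone f)
    (A : Matrix (Fin k) (Fin k) (Polynomial R))
    (hA : ∀ r c : Fin k, ∀ n : ℕ, f r - e c.rev < (n : ℤ) → (A r c).coeff n = 0)
    (i : Fin k) (hfe : f i < e i) :
    A.det = 0 := by
  refine A.det_eq_zero_of_card_lt_of_block_eq_zero (Iic i) (Iic i.rev) ?_ fun r hr c hc => ?_
  · simp only [Fintype.card_fin, Fin.card_Iic, Fin.val_rev]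
    omega
  · have hfr : f r ≤ f i := hf (mem_Iic.mp hr)
    have hec : e i ≤ e c.rev := he (Fin.le_rev_iff.mpr (mem_Iic.mp hc))
    ext n
    exact hA r c n (by omega)

/-- Let `e₁ ≤ … ≤ e_k` and `f₁ ≤ … ≤ f_k` be nondecreasing integer tuples and `A` a `k × k`
matrix over `R[t]` with `deg A r c ≤ f r - e (k+1-c)` (with `deg 0 = -∞`, encoded by the
vanishing of all coefficients beyond the bound; `k+1-c` `1`-indexed is `c.rev` `0`-indexed).
If `f i < e i` for some `i`, then `det A = 0`. -/
theorem stmt_4 {R : Type*} [CommRing R] (k : ℕ) (hk : 1 ≤ k)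
    (e f : Fin k → ℤ) (he : Monotone e) (hf : Monotone f)
    (A : Matrix (Fin k) (Fin k) (Polynomial R))
    (hA : ∀ r c : Fin k, ∀ n : ℕ, f r - e c.rev < (n : ℤ) → (A r c).coeff n = 0)
    (i : Fin k) (hfe : f i < e i) :
    A.det = 0 :=
  stmt_4_general k e f he hf A hA i hfe
end

section
/- Let R be a commutative ring, k ≥ 2, m ≥ 0 an integer, and let e_1 ≤ … ≤ e_k and f_1 ≤ … ≤ f_k be nondecreasing integer tuples. Let A and B be k×k matrices with entries in R[t] satisfying deg A_{r,c} ≤ f_r − e_{k+1−c} and deg B_{r,c} ≤ f_r − e_{k+1−c} + m for all r, c (with deg 0 = −∞, so an entry must be 0 when its bound is negative). Suppose f_i < e_{i+1} − m for some 1 ≤ i ≤ k−1. Then in R[t][x,y] one has det(A·x + B·y) = (−1)^{i(k−i)} · det P · det Q, where P is the i×i matrix with P_{r,s} = (A·x + B·y)_{r, (k−i)+s} and Q is the (k−i)×(k−i) matrix with Q_{r,s} = (A·x + B·y)_{i+r, s}; in particular det(A·x + B·y) is the product of two polynomials that are homogeneous of degrees i and k−i in the variables (x, y). -/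
/-!
The hypothesis `f i < e (i+1) - m` makes the degree bounds of `A` and `B` negative on the
upper-left `i × (k - i)` block, so `N = A x + B y` vanishes there. Rotating the columns
cyclically by `k - i`, a permutation of sign `(-1) ^ (i (k - i))`, turns `N` into a block
lower-triangular matrix with diagonal blocks `P` and `Q`. The entries of `N` are linear forms
in `x, y`, so `det P` and `det Q` are homogeneous of degrees `i` and `k - i`.
-/

open Matrix MvPolynomial

theorem Matrix.isHomogeneous_det {σ ι R : Type*} [CommRing R] [Fintype ι] [DecidableEq ι]
    (M : Matrix ι ι (MvPolynomial σ R)) {d : ℕ} (hM : ∀ r c, (M r c).IsHomogeneous d) :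
    M.det.IsHomogeneous (d * Fintype.card ι) := by
  rw [det_apply']
  refine IsHomogeneous.sum _ _ _ fun τ _ => ?_
  rw [← map_intCast (C : R →+* MvPolynomial σ R)]
  convert (isHomogeneous_C σ _).mul (IsHomogeneous.prod _ _ _ fun c _ => hM (τ c) c) using 1
  simp [Nat.mul_comm]

theorem coe_finRotate_pow {n : ℕ} (j : ℕ) (x : Fin n) :
    ((finRotate n ^ j) x : ℕ) = (x + j) % n := by
  induction j with
  | zero => simp [Nat.mod_eq_of_lt x.isLt]
  | succ j ih =>
    have := x.neZero
    rw [pow_succ', Equiv.Perm.mul_apply, finRotate_apply, Fin.val_add, ih, Fin.val_one',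
      ← Nat.add_mod, ← add_assoc]

theorem sign_finRotate_pow_sub {n a : ℕ} (ha : a ≤ n) :
    Equiv.Perm.sign (finRotate n ^ (n - a)) = (-1) ^ (a * (n - a)) := by
  obtain ⟨b, rfl⟩ := Nat.exists_eq_add_of_le ha
  rw [Nat.add_sub_cancel_left, map_pow, sign_finRotate, ← pow_mul]
  rcases b with _ | c
  · simp
  · have hpar : (a + (c + 1) - 1) * (c + 1) = a * (c + 1) + c * (c + 1) := by
      rw [show a + (c + 1) - 1 = a + c by omega, add_mul]
    rw [hpar, pow_add, (Nat.even_mul_succ_self c).neg_one_pow, mul_one]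

theorem Matrix.det_eq_of_upper_left_block_eq_zero {R : Type*} [CommRing R] {n a : ℕ}
    (ha : a ≤ n) (M : Matrix (Fin n) (Fin n) R)
    (hM : ∀ r c : Fin n, (r : ℕ) < a → (c : ℕ) < n - a → M r c = 0) :
    M.det = (-1) ^ (a * (n - a)) *
      (of fun r s : Fin a =>
        M ⟨r, by have := r.isLt; omega⟩ ⟨n - a + s, by have := s.isLt; omega⟩).det *
      (of fun r s : Fin (n - a) =>
        M ⟨a + r, by have := r.isLt; omega⟩ ⟨s, by have := s.isLt; omega⟩).det := by
  let e : Fin a ⊕ Fin (n - a) ≃ Fin n := finSumFinEquiv.trans (finCongr (by omega))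
  let τ := finRotate n ^ (n - a)
  have hτe : ∀ c, τ (e c) = Sum.elim (fun s : Fin a => ⟨n - a + s, by omega⟩)
      (fun s : Fin (n - a) => ⟨s, by omega⟩) c := by
    rintro (s | s) <;> ext <;>
      simp only [τ, e, coe_finRotate_pow, Equiv.trans_apply, finSumFinEquiv_apply_left,
        finSumFinEquiv_apply_right, finCongr_apply, Fin.val_cast, Fin.val_castAdd,
        Fin.val_natAdd, Sum.elim_inl, Sum.elim_inr]
    · rw [Nat.mod_eq_of_lt (by omega)]; omega
    · rw [show a + s + (n - a) = s + n by omega, Nat.add_mod_right, Nat.mod_eq_of_lt (by omega)]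
  set M' := (M.submatrix id τ).submatrix e e
  have hdet : M'.det = Equiv.Perm.sign τ * M.det := by
    rw [det_submatrix_equiv_self, det_permute']
  have hblocks : M' = fromBlocks
      (of fun r s : Fin a =>
        M ⟨r, by have := r.isLt; omega⟩ ⟨n - a + s, by have := s.isLt; omega⟩) 0 M'.toBlocks₂₁
      (of fun r s : Fin (n - a) =>
        M ⟨a + r, by have := r.isLt; omega⟩ ⟨s, by have := s.isLt; omega⟩) := by
    ext (r | r) (s | s)
    · simp only [M', submatrix_apply, id_eq, hτe]; rfl
    · simp only [M', submatrix_apply, id_eq, hτe]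
      exact hM _ _ (by simp [e]) (by simp)
    · rfl
    · simp only [M', submatrix_apply, id_eq, hτe]; rfl
  rw [hblocks, det_fromBlocks_zero₁₂, sign_finRotate_pow_sub ha] at hdet
  rw [mul_assoc, hdet]
  push_cast
  rw [← mul_assoc, ← mul_pow, neg_one_mul, neg_neg, one_pow, one_mul]

theorem Polynomial.eq_zero_of_coeff_eq_zero_above_neg {R : Type*} [Semiring R] {p : Polynomial R}
    {d : ℤ} (hd : d < 0) (hp : ∀ n : ℕ, d < n → p.coeff n = 0) : p = 0 :=
  Polynomial.ext fun n => hp n (by omega)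

/-- Suppose `e₁ ≤ … ≤ e_k`, `f₁ ≤ … ≤ f_k` are nondecreasing integer tuples, `A`, `B` are
`k × k` matrices over `R[t]` with `deg A r c ≤ f r - e (k+1-c)` and
`deg B r c ≤ f r - e (k+1-c) + m` (with `deg 0 = -∞`, encoded by vanishing of coefficients
beyond the bound), and `f i < e (i+1) - m` for some `1 ≤ i ≤ k-1`.  Let
`N = A·x + B·y` over `R[t][x,y]` (with `x = X 0`, `y = X 1`).  Then
`det N = (-1)^(i(k-i)) · det P · det Q` where `P r s = N r ((k-i)+s)` and `Q r s = N (i+r) s`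
(`1`-indexed); in particular `det N` is the product of two polynomials homogeneous of degrees
`i` and `k - i` in `(x, y)`. -/
theorem stmt_5 {R : Type*} [CommRing R] (k : ℕ) (m : ℕ)
    (e f : Fin k → ℤ) (he : Monotone e) (hf : Monotone f)
    (A B : Matrix (Fin k) (Fin k) (Polynomial R))
    (hA : ∀ r c : Fin k, ∀ n : ℕ, f r - e c.rev < (n : ℤ) → (A r c).coeff n = 0)
    (hB : ∀ r c : Fin k, ∀ n : ℕ, f r - e c.rev + (m : ℤ) < (n : ℤ) → (B r c).coeff n = 0)
    (i : ℕ) (hi1 : 1 ≤ i) (hi2 : i ≤ k - 1)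
    (hfe : f ⟨i - 1, by omega⟩ < e ⟨i, by omega⟩ - (m : ℤ))
    (N : Matrix (Fin k) (Fin k) (MvPolynomial (Fin 2) (Polynomial R)))
    (hN : N = Matrix.of fun r c : Fin k =>
      MvPolynomial.C (A r c) * MvPolynomial.X 0 + MvPolynomial.C (B r c) * MvPolynomial.X 1)
    (P : Matrix (Fin i) (Fin i) (MvPolynomial (Fin 2) (Polynomial R)))
    (hP : ∀ r s : Fin i, P r s =
      N ⟨(r : ℕ), by have := r.isLt; omega⟩ ⟨k - i + (s : ℕ), by have := s.isLt; omega⟩)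
    (Q : Matrix (Fin (k - i)) (Fin (k - i)) (MvPolynomial (Fin 2) (Polynomial R)))
    (hQ : ∀ r s : Fin (k - i), Q r s =
      N ⟨i + (r : ℕ), by have := r.isLt; omega⟩ ⟨(s : ℕ), by have := s.isLt; omega⟩) :
    N.det = (-1) ^ (i * (k - i)) * P.det * Q.det ∧
      P.det.IsHomogeneous i ∧ Q.det.IsHomogeneous (k - i) := by
  have hzero : ∀ r c : Fin k, (r : ℕ) < i → (c : ℕ) < k - i → N r c = 0 := by
    intro r c hr hc
    have hfr : f r ≤ f ⟨i - 1, by omega⟩ := hf (Fin.le_def.mpr (by simp; omega))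
    have hec : e ⟨i, by omega⟩ ≤ e c.rev := he (Fin.le_def.mpr (by simp; omega))
    have hbound : f r - e c.rev + m < 0 := by omega
    have hAz : A r c = 0 := Polynomial.eq_zero_of_coeff_eq_zero_above_neg (by omega)
      fun n hn => hA r c n (by omega)
    have hBz : B r c = 0 := Polynomial.eq_zero_of_coeff_eq_zero_above_neg hbound (hB r c)
    simp [hN, hAz, hBz]
  have hlinear : ∀ r c : Fin k, (N r c).IsHomogeneous 1 := fun r c => by
    rw [hN]
    exact (isHomogeneous_C_mul_X _ _).add (isHomogeneous_C_mul_X _ _)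
  refine ⟨?_, by simpa using P.isHomogeneous_det (d := 1) fun r s => hP r s ▸ hlinear _ _,
    by simpa using Q.isHomogeneous_det (d := 1) fun r s => hQ r s ▸ hlinear _ _⟩
  rw [Matrix.ext hP, Matrix.ext hQ]
  exact det_eq_of_upper_left_block_eq_zero (by omega) N hzero
end

section
/- Let F be an algebraically closed field, n ≥ 1, and d_1, …, d_n ≥ 0 integers. There exist nonzero homogeneous polynomials Q_1, …, Q_n ∈ F[s,t] with deg Q_i = d_i such that the F-linear map sending an n-tuple (Q_1', …, Q_n'), where each Q_i' ∈ F[s,t] is homogeneous of degree d_i, to Σ_{i=1}^{n} Q_1⋯Q_{i−1}·Q_i'·Q_{i+1}⋯Q_n is surjective onto the space of homogeneous polynomials of degree d_1 + ⋯ + d_n in F[s,t]. -/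
/-!
Take `Qᵢ = (s - aᵢ t) ^ dᵢ` with distinct `aᵢ ∈ F`. Setting `t = 1` identifies binary forms of
degree `m` with polynomials of degree at most `m`, so it suffices to write every `f` with
`deg f ≤ ∑ dᵢ` as `∑ rᵢ ∏_{j ≠ i} qⱼ` with `deg rᵢ ≤ dᵢ`, where `qᵢ = (X - aᵢ) ^ dᵢ`. The `qᵢ`
are monic and pairwise coprime, so partial fractions give `f = c ∏ qᵢ + ∑ rᵢ ∏_{j ≠ i} qⱼ` with
`deg rᵢ < dᵢ`; comparing degrees forces `c` to be a constant, and `c qᵢ₀` is absorbed into `rᵢ₀`.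
-/

open Finset

theorem MvPolynomial.IsHomogeneous.natDegree_aeval_X_one_le {R : Type*} [CommSemiring R]
    {P : MvPolynomial (Fin 2) R} {n : ℕ} (hP : P.IsHomogeneous n) :
    (MvPolynomial.aeval ![(Polynomial.X : Polynomial R), 1] P).natDegree ≤ n := by
  rw [P.as_sum, map_sum]
  refine Polynomial.natDegree_sum_le_of_forall_le _ _ fun m hm => ?_
  have hmn : m 0 + m 1 = n := by
    simpa [Finsupp.weight_apply, Finsupp.sum_fintype] using hP (MvPolynomial.mem_support_iff.mp hm)
  simp only [MvPolynomial.aeval_monomial, Finsupp.prod_fintype _ _ (fun _ => pow_zero _),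
    Fin.prod_univ_two, Matrix.cons_val_zero, Matrix.cons_val_one, one_pow, mul_one]
  exact (Polynomial.natDegree_C_mul_X_pow_le _ _).trans (by omega)

namespace Polynomial

section CommSemiring

variable {R : Type*} [CommSemiring R] {ι : Type*} [Fintype ι] [DecidableEq ι]

theorem natDegree_mul_prod_erase_le {r : R[X]} {g : ι → R[X]} {i : ι}
    (hr : r.natDegree ≤ (g i).natDegree) :
    (r * ∏ j ∈ univ.erase i, g j).natDegree ≤ ∑ j, (g j).natDegree := by
  rw [← add_sum_erase _ _ (mem_univ i)]
  exact natDegree_mul_le.trans (add_le_add hr (natDegree_prod_le _ _))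

theorem homogenize_sum_mul_prod_erase {r q : ι → R[X]} {d : ι → ℕ}
    (hr : ∀ i, (r i).natDegree ≤ d i) (hq : ∀ i, (q i).natDegree ≤ d i) :
    (∑ i, r i * ∏ j ∈ univ.erase i, q j).homogenize (∑ i, d i) =
      ∑ i, (r i).homogenize (d i) * ∏ j ∈ univ.erase i, (q j).homogenize (d j) := by
  rw [homogenize_finsetSum]
  refine sum_congr rfl fun i _ => ?_
  rw [← add_sum_erase _ _ (mem_univ i),
    homogenize_mul _ _ (hr i) ((natDegree_prod_le _ _).trans (sum_le_sum fun j _ => hq j)),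
    homogenize_finsetProd fun j _ => hq j]

end CommSemiring

variable {R : Type*} [CommRing R] [Nontrivial R] {ι : Type*} [Fintype ι] [DecidableEq ι]
  [Nonempty ι]

theorem exists_sum_mul_prod_erase_eq {g : ι → R[X]} (hg : ∀ i, (g i).Monic)
    (hgg : Pairwise fun i j => IsCoprime (g i) (g j)) {f : R[X]}
    (hf : f.natDegree ≤ ∑ i, (g i).natDegree) :
    ∃ r : ι → R[X], (∀ i, (r i).natDegree ≤ (g i).natDegree) ∧
      ∑ i, r i * ∏ j ∈ univ.erase i, g j = f := by
  obtain ⟨q, r, hr, hfqr⟩ :=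
    eq_quo_mul_prod_add_sum_rem_mul_prod f (s := univ) (fun i _ => hg i) (hgg.set_pairwise _)
  replace hr i : (r i).natDegree ≤ (g i).natDegree := natDegree_le_natDegree (hr i (mem_univ i)).le
  have hq : q.natDegree = 0 := by
    have hprod : (∏ i, g i).Monic := monic_prod_of_monic _ _ fun i _ => hg i
    have hle : (q * ∏ i, g i).natDegree ≤ ∑ i, (g i).natDegree := by
      rw [eq_sub_of_add_eq hfqr.symm]
      exact (natDegree_sub_le _ _).trans <| max_le hf <|
        natDegree_sum_le_of_forall_le _ _ fun i _ => natDegree_mul_prod_erase_le (hr i)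
    rcases eq_or_ne q 0 with rfl | hq0
    · simp
    rw [← hprod.natDegree_mul_comm, hprod.natDegree_mul' hq0,
      natDegree_prod_of_monic _ _ fun i _ => hg i] at hle
    omega
  obtain ⟨i₀⟩ := ‹Nonempty ι›
  refine ⟨r + Pi.single i₀ (q * g i₀), fun i => ?_, ?_⟩
  · rw [Pi.add_apply]
    refine (natDegree_add_le _ _).trans (max_le (hr i) ?_)
    rcases eq_or_ne i i₀ with rfl | hi
    · rw [Pi.single_eq_same]
      exact natDegree_mul_le.trans (by rw [hq, zero_add])
    · rw [Pi.single_eq_of_ne hi, natDegree_zero]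
      exact zero_le
  · simp only [Pi.add_apply, add_mul, sum_add_distrib]
    rw [hfqr, add_comm (q * _), add_right_inj,
      Fintype.sum_eq_single i₀ fun i hi => by rw [Pi.single_eq_of_ne hi, zero_mul],
      Pi.single_eq_same, mul_assoc, mul_prod_erase _ _ (mem_univ i₀)]

theorem exists_monic_natDegree_eq_pairwise_isCoprime {K : Type*} [Field K] [Infinite K]
    {ι : Type*} [Countable ι] (d : ι → ℕ) :
    ∃ g : ι → K[X], (∀ i, (g i).Monic ∧ (g i).natDegree = d i) ∧
      Pairwise fun i j => IsCoprime (g i) (g j) := by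
  obtain ⟨e, he⟩ := Countable.exists_injective_nat ι
  have ha : Function.Injective (Infinite.natEmbedding K ∘ e) :=
    (Infinite.natEmbedding K).injective.comp he
  refine ⟨fun i => (X - C (Infinite.natEmbedding K (e i))) ^ d i,
    fun i => ⟨(monic_X_sub_C _).pow _, by simp⟩, fun i j hij => ?_⟩
  exact (pairwise_coprime_X_sub_C ha hij).pow

end Polynomial

open Polynomial

/-- Lemma 3.5 (existence form): there exist nonzero binary forms `Q₁, …, Qₙ` of degrees
`d₁, …, dₙ` over an algebraically closed field `F` such that the linear map
`(Q₁', …, Qₙ') ↦ Σᵢ Q₁⋯Q_{i-1}·Qᵢ'·Q_{i+1}⋯Qₙ` (with `Qᵢ'` homogeneous of degree `dᵢ`)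
is surjective onto the binary forms of degree `d₁ + ⋯ + dₙ`. -/
theorem stmt_9 {F : Type*} [Field F] [IsAlgClosed F] (n : ℕ) (hn : 1 ≤ n)
    (d : Fin n → ℕ) :
    ∃ Q : Fin n → MvPolynomial (Fin 2) F,
      (∀ i, Q i ≠ 0 ∧ (Q i).IsHomogeneous (d i)) ∧
      ∀ P : MvPolynomial (Fin 2) F, P.IsHomogeneous (∑ i, d i) →
        ∃ Q' : Fin n → MvPolynomial (Fin 2) F,
          (∀ i, (Q' i).IsHomogeneous (d i)) ∧
          ∑ i, (Q' i * ∏ j ∈ Finset.univ.erase i, Q j) = P := by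
  have : Nonempty (Fin n) := ⟨⟨0, hn⟩⟩
  obtain ⟨g, hg, hcop⟩ := exists_monic_natDegree_eq_pairwise_isCoprime (K := F) d
  refine ⟨fun i => (g i).homogenize (d i), fun i => ⟨?_, isHomogeneous_homogenize _⟩,
    fun P hP => ?_⟩
  · rw [Ne, homogenize_eq_zero_iff (hg i).2.le]
    exact (hg i).1.ne_zero
  obtain ⟨r, hr, hsum⟩ := exists_sum_mul_prod_erase_eq (fun i => (hg i).1) hcop
    (f := MvPolynomial.aeval ![X, 1] P) (by simpa [hg] using hP.natDegree_aeval_X_one_le)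
  simp only [hg] at hr
  refine ⟨fun i => (r i).homogenize (d i), fun i => isHomogeneous_homogenize _, ?_⟩
  rw [← homogenize_sum_mul_prod_erase hr fun i => (hg i).2.le, hsum,
    homogenize_eq_of_isHomogeneous hP rfl]
end

section
/- Let F be an algebraically closed field and f, g ∈ F[t] nonzero squarefree polynomials with no common factor (gcd(f, g) = 1). Let a, b be nonnegative integers with a + b = deg f + deg g and a ≥ deg g. Then there exist A, B ∈ F[t] with deg A ≤ a and deg B ≤ b such that the F-linear map from {(A', B') : A', B' ∈ F[t], deg A' ≤ a, deg B' ≤ b} to (F[t]/(f)) × (F[t]/(g)) sending (A', B') to (the residue class of A'·B + B'·A modulo f, the residue class of A' modulo g) is surjective. -/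
/-!
Split `f = f₁ f₂` with `deg f₁ = b` (possible since `f` splits and `b ≤ deg f`), and take
`A = f₂`, `B = f₁`, so that `deg A = a - deg g`. As `f₁, f₂` are coprime, `A' f₁ + B' f₂ ≡ u
(mod f)` holds as soon as `B' ≡ u f₂⁻¹ (mod f₁)` and `A' ≡ u f₁⁻¹ (mod f₂)`. Together with
`A' ≡ v (mod g)` these are Chinese-remainder conditions on `B'` modulo `f₁` and on `A'` modulo
`g f₂`, whose residues have representatives of degree at most `b` and `a` respectively.
-/

open Polynomial

theorem Multiset.exists_le_card_eq {α : Type*} {s : Multiset α} {n : ℕ} (hn : n ≤ card s) :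
    ∃ t ≤ s, card t = n := by
  obtain ⟨t, ht⟩ := card_pos_iff_exists_mem.1
    (by rw [card_powersetCard]; exact Nat.choose_pos hn : 0 < card (powersetCard n s))
  exact ⟨t, mem_powersetCard.1 ht⟩

theorem IsCoprime.exists_dvd_sub_and_dvd_sub {R : Type*} [CommRing R] {p q : R}
    (h : IsCoprime p q) (x y : R) : ∃ z, p ∣ z - x ∧ q ∣ z - y := by
  obtain ⟨a, b, hab⟩ := h
  exact ⟨b * q * x + a * p * y, ⟨a * (y - x), by linear_combination x * hab⟩,
    ⟨b * (x - y), by linear_combination y * hab⟩⟩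

theorem mul_dvd_mul_add_mul_sub_of_dvd_sub {R : Type*} [CommRing R] {p q a b u A B : R}
    (hab : a * p + b * q = 1) (hA : q ∣ A - u * a) (hB : p ∣ B - u * b) :
    p * q ∣ A * p + B * q - u := by
  obtain ⟨k, hk⟩ := hA
  obtain ⟨l, hl⟩ := hB
  exact ⟨k + l, by linear_combination p * hk + q * hl + u * hab⟩

namespace Polynomial

theorem Splits.exists_dvd_natDegree_eq {R : Type*} [CommRing R] [IsDomain R] {f : R[X]}
    (hf : f.Splits) {n : ℕ} (hn : n ≤ f.natDegree) : ∃ d, d ∣ f ∧ d.natDegree = n := by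
  obtain ⟨s, hs, hcard⟩ := Multiset.exists_le_card_eq (hf.natDegree_eq_card_roots ▸ hn)
  refine ⟨(s.map (X - C ·)).prod, ?_, by rw [natDegree_multiset_prod_X_sub_C_eq_card, hcard]⟩
  exact (Multiset.prod_dvd_prod_of_le (Multiset.map_le_map hs)).trans
    (prod_multiset_X_sub_C_dvd f)

theorem exists_natDegree_le_dvd_sub {K : Type*} [Field K] {p : K[X]} (hp : p ≠ 0) (x : K[X]) :
    ∃ r, r.natDegree ≤ p.natDegree ∧ p ∣ x - r :=
  ⟨x % p, natDegree_le_natDegree (degree_mod_lt x hp).le,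
    ⟨x / p, by rw [EuclideanDomain.mod_eq_sub_mul_div, sub_sub_cancel]⟩⟩

theorem exists_natDegree_le_mul_add_mul_sub_dvd {K : Type*} [Field K] {f₁ f₂ g : K[X]}
    (h₁₂ : IsCoprime f₁ f₂) (hg₂ : IsCoprime g f₂) (hf₁ : f₁ ≠ 0) (hgf₂ : g * f₂ ≠ 0)
    (u v : K[X]) :
    ∃ A' B' : K[X], A'.natDegree ≤ (g * f₂).natDegree ∧ B'.natDegree ≤ f₁.natDegree ∧
      f₁ * f₂ ∣ A' * f₁ + B' * f₂ - u ∧ g ∣ A' - v := by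
  obtain ⟨a, b, hab⟩ := h₁₂
  obtain ⟨z, hzv, hzu⟩ := hg₂.exists_dvd_sub_and_dvd_sub v (u * a)
  obtain ⟨A', hA'deg, hzA'⟩ := exists_natDegree_le_dvd_sub hgf₂ z
  obtain ⟨B', hB'deg, hB'⟩ := exists_natDegree_le_dvd_sub hf₁ (u * b)
  have hA'u : f₂ ∣ A' - u * a := by
    simpa using dvd_sub hzu ((dvd_mul_left f₂ g).trans hzA')
  have hA'v : g ∣ A' - v := by
    simpa using dvd_sub hzv ((dvd_mul_right g f₂).trans hzA')
  exact ⟨A', B', hA'deg, hB'deg,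
    mul_dvd_mul_add_mul_sub_of_dvd_sub hab hA'u (dvd_sub_comm.1 hB'), hA'v⟩

end Polynomial

theorem stmt_12_general {F : Type*} [Field F] [IsAlgClosed F]
    (f g : Polynomial F) (hg0 : g ≠ 0)
    (hf : Squarefree f) (hfg : IsCoprime f g)
    (a b : ℕ) (hab : a + b = f.natDegree + g.natDegree) (hag : g.natDegree ≤ a) :
    ∃ A B : Polynomial F, A.natDegree ≤ a ∧ B.natDegree ≤ b ∧
      ∀ (u : Polynomial F ⧸ Ideal.span {f}) (v : Polynomial F ⧸ Ideal.span {g}),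
        ∃ A' B' : Polynomial F, A'.natDegree ≤ a ∧ B'.natDegree ≤ b ∧
          Ideal.Quotient.mk (Ideal.span {f}) (A' * B + B' * A) = u ∧
          Ideal.Quotient.mk (Ideal.span {g}) A' = v := by
  obtain ⟨f₁, ⟨f₂, rfl⟩, hf₁deg⟩ :=
    (IsAlgClosed.splits f).exists_dvd_natDegree_eq (n := b) (by omega)
  obtain ⟨hf₁, hf₂⟩ := mul_ne_zero_iff.1 hf.ne_zero
  have hgf₂deg : (g * f₂).natDegree = a := by
    rw [natDegree_mul hf₁ hf₂] at hab
    rw [natDegree_mul hg0 hf₂]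
    omega
  have h₁₂ : IsCoprime f₁ f₂ := (squarefree_mul_iff.1 hf).1.isCoprime
  have hg₂ : IsCoprime g f₂ := hfg.symm.of_isCoprime_of_dvd_right (dvd_mul_left f₂ f₁)
  refine ⟨f₂, f₁, ?_, hf₁deg.le, fun u v => ?_⟩
  · exact hgf₂deg ▸ natDegree_le_of_dvd (dvd_mul_left f₂ g) (mul_ne_zero hg0 hf₂)
  obtain ⟨u, rfl⟩ := Ideal.Quotient.mk_surjective u
  obtain ⟨v, rfl⟩ := Ideal.Quotient.mk_surjective v
  obtain ⟨A', B', hA'deg, hB'deg, hu, hv⟩ :=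
    exists_natDegree_le_mul_add_mul_sub_dvd h₁₂ hg₂ hf₁ (mul_ne_zero hg0 hf₂) u v
  exact ⟨A', B', hgf₂deg ▸ hA'deg, hf₁deg ▸ hB'deg,
    Ideal.Quotient.eq.2 (Ideal.mem_span_singleton.2 hu),
    Ideal.Quotient.eq.2 (Ideal.mem_span_singleton.2 hv)⟩

/-- The final lemma of Section 3 (existence form): for squarefree coprime `f, g ∈ F[t]` and
`a + b = deg f + deg g` with `a ≥ deg g`, there exist `A, B` of degrees `≤ a, ≤ b` such that
`(A', B') ↦ (A'·B + B'·A mod f, A' mod g)`, on pairs with `deg A' ≤ a` and `deg B' ≤ b`,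
is surjective onto `F[t]/(f) × F[t]/(g)`. -/
theorem stmt_12 {F : Type*} [Field F] [IsAlgClosed F]
    (f g : Polynomial F) (hf0 : f ≠ 0) (hg0 : g ≠ 0)
    (hf : Squarefree f) (hg : Squarefree g) (hfg : IsCoprime f g)
    (a b : ℕ) (hab : a + b = f.natDegree + g.natDegree) (hag : g.natDegree ≤ a) :
    ∃ A B : Polynomial F, A.natDegree ≤ a ∧ B.natDegree ≤ b ∧
      ∀ (u : Polynomial F ⧸ Ideal.span {f}) (v : Polynomial F ⧸ Ideal.span {g}),
        ∃ A' B' : Polynomial F, A'.natDegree ≤ a ∧ B'.natDegree ≤ b ∧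
          Ideal.Quotient.mk (Ideal.span {f}) (A' * B + B' * A) = u ∧
          Ideal.Quotient.mk (Ideal.span {g}) A' = v :=
  stmt_12_general f g hg0 hf hfg a b hab hag
end

section
/- Let k ≥ 1 and let m, δ, e_1, …, e_k be integers. There exist integers f_1, …, f_k satisfying f_i ≥ e_i for all 1 ≤ i ≤ k, f_i ≥ e_{i+1} − m for all 1 ≤ i ≤ k−1, and Σ_{i=1}^{k} (f_i − e_i) = δ, if and only if Σ_{i=1}^{k−1} max(0, e_{i+1} − e_i − m) ≤ δ. -/
/-!
Writing `dᵢ = fᵢ - eᵢ`, the constraints on `f` say exactly `dᵢ ≥ cᵢ`, where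
`cᵢ = max 0 (e_{i+1} - eᵢ - m)` for `i < k` and `c_k = 0`. A vector bounded below by `c` with
coordinate sum `δ` exists iff `Σ cᵢ ≤ δ`: put the surplus `δ - Σ cᵢ` on one coordinate.
-/

open Finset

theorem exists_ge_sum_eq_iff {ι M : Type*} [Fintype ι] [Nonempty ι] [DecidableEq ι]
    [AddCommGroup M] [PartialOrder M] [IsOrderedAddMonoid M] (g : ι → M) (s : M) :
    (∃ f : ι → M, (∀ i, g i ≤ f i) ∧ ∑ i, f i = s) ↔ ∑ i, g i ≤ s := by
  constructor
  · rintro ⟨f, hgf, rfl⟩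
    exact sum_le_sum fun i _ => hgf i
  · intro hs
    obtain ⟨i₀⟩ := ‹Nonempty ι›
    refine ⟨g + Pi.single i₀ (s - ∑ i, g i), fun i => ?_, ?_⟩
    · exact le_add_of_nonneg_right ((Pi.single_nonneg.2 (sub_nonneg.2 hs) : (0 : ι → M) ≤ _) i)
    · simp [sum_add_distrib]

def minExcess {k : ℕ} (m : ℤ) (e : Fin k → ℤ) (i : Fin k) : ℤ :=
  if h : (i : ℕ) + 1 < k then max 0 (e ⟨(i : ℕ) + 1, h⟩ - e i - m) else 0

theorem minExcess_le_iff {k : ℕ} (m : ℤ) (e f : Fin k → ℤ) (i : Fin k) :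
    minExcess m e i ≤ f i - e i ↔
      e i ≤ f i ∧ ∀ h : (i : ℕ) + 1 < k, e ⟨(i : ℕ) + 1, h⟩ - m ≤ f i := by
  unfold minExcess
  split_ifs with h
  · simp only [max_le_iff, h, forall_true_left]
    omega
  · simp [h]

theorem sum_minExcess (n : ℕ) (m : ℤ) (e : Fin (n + 1) → ℤ) :
    ∑ i, minExcess m e i = ∑ j : Fin n, max 0 (e j.succ - e j.castSucc - m) := by
  simp only [minExcess, Fin.sum_univ_castSucc, Fin.val_castSucc, Fin.val_last,
    Order.lt_add_one_iff, Order.add_one_le_iff, Fin.is_lt, lt_self_iff_false, ↓reduceDIte, add_zero]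
  rfl

/-- Integer combinatorics behind Corollary 1.7: there exist integers `f₁, …, f_k` with
`fᵢ ≥ eᵢ`, `fᵢ ≥ e_{i+1} - m` (for `1 ≤ i ≤ k-1`) and `Σ (fᵢ - eᵢ) = δ` if and only if
`Σ_{i=1}^{k-1} max 0 (e_{i+1} - eᵢ - m) ≤ δ`. -/
theorem stmt_13 (k : ℕ) (hk : 1 ≤ k) (m δ : ℤ) (e : Fin k → ℤ) :
    (∃ f : Fin k → ℤ,
      (∀ i, e i ≤ f i) ∧
      (∀ i : Fin k, ∀ h : (i : ℕ) + 1 < k, e ⟨(i : ℕ) + 1, h⟩ - m ≤ f i) ∧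
      ∑ i, (f i - e i) = δ) ↔
    ∑ i : Fin (k - 1),
      max 0 (e ⟨(i : ℕ) + 1, by have := i.isLt; omega⟩ -
        e ⟨(i : ℕ), by have := i.isLt; omega⟩ - m) ≤ δ := by
  obtain ⟨n, rfl⟩ : ∃ n, k = n + 1 := ⟨k - 1, by omega⟩
  have hexcess : (∃ f : Fin (n + 1) → ℤ, (∀ i, e i ≤ f i) ∧
      (∀ i : Fin (n + 1), ∀ h : (i : ℕ) + 1 < n + 1, e ⟨(i : ℕ) + 1, h⟩ - m ≤ f i) ∧
      ∑ i, (f i - e i) = δ) ↔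
      ∃ d : Fin (n + 1) → ℤ, (∀ i, minExcess m e i ≤ d i) ∧ ∑ i, d i = δ := by
    constructor
    · rintro ⟨f, hfe, hfm, hsum⟩
      exact ⟨f - e, fun i => (minExcess_le_iff m e f i).2 ⟨hfe i, hfm i⟩, hsum⟩
    · rintro ⟨d, hd, hsum⟩
      refine ⟨d + e, ?_⟩
      have hd' i := (minExcess_le_iff m e (d + e) i).1 (by simpa using hd i)
      exact ⟨fun i => (hd' i).1, fun i => (hd' i).2, by simpa using hsum⟩
  rw [hexcess, exists_ge_sum_eq_iff, sum_minExcess]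
  rfl
end
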